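/- arXiv:2012.04800 — 2 statements merged into one kernel-verified Lean document; each statement's English description precedes it below -/
import Mathlib

section
/- Let ω ∈ ℝ, β ∈ ℝ^d with β ≠ 0, and x̂ ∈ ℝ^d. Define L : ℝ → ℝ by L(k) = ω² ‖β‖₂² k² + ω / (1 + exp(-⟨β, x̂⟩ + k ω ‖β‖₂²)). Then L attains its infimum over ℝ at some point k⋆ ∈ [0, 1/8], i.e., inf_{k ∈ ℝ} L(k) = min_{k ∈ [0, 1/8]} L(k). -/
/-!
With `m = ω‖β‖²` and `c = ⟨β, x̂⟩` we have `L k = ω m k² + ω σ(c - k m)`, where `σ` is the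
logistic sigmoid, so `L' k = ω m (2k - σ'(c - k m))`. Since `ω m = ω²‖β‖² ≥ 0` and
`0 ≤ σ' = σ(1 - σ) ≤ 1/4`, `L` is antitone on `(-∞, 0]` and monotone on `[1/8, ∞)`, so its
minimum over the compact interval `[0, 1/8]` is a global minimum.
-/

open Real Set

lemma sigmoid_mul_one_sub_sigmoid_le (x : ℝ) : sigmoid x * (1 - sigmoid x) ≤ 1 / 4 := by
  nlinarith [sq_nonneg (2 * sigmoid x - 1)]

lemma sigmoid_mul_one_sub_sigmoid_nonneg (x : ℝ) : 0 ≤ sigmoid x * (1 - sigmoid x) :=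
  mul_nonneg (sigmoid_nonneg x) (sub_nonneg.2 (sigmoid_le_one x))

lemma exists_forall_le_of_antitoneOn_Iic_of_monotoneOn_Ici {α β : Type*} [LinearOrder α]
    [TopologicalSpace α] [CompactIccSpace α] [LinearOrder β] [TopologicalSpace β]
    [ClosedIicTopology β] {f : α → β} {p q : α} (hpq : p ≤ q) (hf : ContinuousOn f (Icc p q))
    (hanti : AntitoneOn f (Iic p)) (hmono : MonotoneOn f (Ici q)) :
    ∃ x ∈ Icc p q, ∀ y, f x ≤ f y := by
  obtain ⟨x, hx, hmin⟩ := isCompact_Icc.exists_isMinOn (nonempty_Icc.2 hpq) hf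
  refine ⟨x, hx, fun y => ?_⟩
  rcases le_total y p with hyp | hpy
  · exact (hmin (left_mem_Icc.2 hpq)).trans (hanti hyp le_rfl hyp)
  rcases le_total y q with hyq | hqy
  · exact hmin ⟨hpy, hyq⟩
  · exact (hmin (right_mem_Icc.2 hpq)).trans (hmono le_rfl hqy hqy)

section QuadraticAddSigmoid

variable (ω m c : ℝ)

lemma hasDerivAt_quadratic_add_sigmoid (k : ℝ) :
    HasDerivAt (fun k => ω * m * k ^ 2 + ω * sigmoid (c - k * m))
      (ω * m * (2 * k - sigmoid (c - k * m) * (1 - sigmoid (c - k * m)))) k := by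
  have hlin : HasDerivAt (fun k => c - k * m) (-m) k := by
    simpa using ((hasDerivAt_id k).mul_const m).const_sub c
  refine (((hasDerivAt_pow 2 k).const_mul (ω * m)).add
    (((hasDerivAt_sigmoid _).comp k hlin).const_mul ω)).congr_deriv ?_
  push_cast
  ring

variable {ω m}

lemma antitoneOn_quadratic_add_sigmoid (hωm : 0 ≤ ω * m) :
    AntitoneOn (fun k => ω * m * k ^ 2 + ω * sigmoid (c - k * m)) (Iic 0) := by
  refine antitoneOn_of_hasDerivWithinAt_nonpos (convex_Iic 0)
    (fun k _ => (hasDerivAt_quadratic_add_sigmoid ω m c k).continuousAt.continuousWithinAt)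
    (fun k _ => (hasDerivAt_quadratic_add_sigmoid ω m c k).hasDerivWithinAt) fun k hk => ?_
  rw [interior_Iic] at hk
  exact mul_nonpos_of_nonneg_of_nonpos hωm <| by
    linarith [sigmoid_mul_one_sub_sigmoid_nonneg (c - k * m), mem_Iio.1 hk]

lemma monotoneOn_quadratic_add_sigmoid (hωm : 0 ≤ ω * m) :
    MonotoneOn (fun k => ω * m * k ^ 2 + ω * sigmoid (c - k * m)) (Ici (1 / 8)) := by
  refine monotoneOn_of_hasDerivWithinAt_nonneg (convex_Ici _)
    (fun k _ => (hasDerivAt_quadratic_add_sigmoid ω m c k).continuousAt.continuousWithinAt)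
    (fun k _ => (hasDerivAt_quadratic_add_sigmoid ω m c k).hasDerivWithinAt) fun k hk => ?_
  rw [interior_Ici] at hk
  exact mul_nonneg hωm <| by
    linarith [sigmoid_mul_one_sub_sigmoid_le (c - k * m), mem_Ioi.1 hk]

end QuadraticAddSigmoid

theorem univariate_min_in_interval_general (d : ℕ) (β : EuclideanSpace ℝ (Fin d))
    (ω : ℝ) (xhat : EuclideanSpace ℝ (Fin d)) (L : ℝ → ℝ)
    (hL : ∀ k, L k = ω ^ 2 * ‖β‖ ^ 2 * k ^ 2
        + ω / (1 + Real.exp (-(inner ℝ β xhat : ℝ) + k * ω * ‖β‖ ^ 2))) :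
    ∃ kstar ∈ Set.Icc (0:ℝ) (1/8), ∀ k : ℝ, L kstar ≤ L k := by
  have hL' : L = fun k => ω * (ω * ‖β‖ ^ 2) * k ^ 2
      + ω * sigmoid (inner ℝ β xhat - k * (ω * ‖β‖ ^ 2)) := by
    ext k
    rw [hL, sigmoid_def, div_eq_mul_inv]
    ring_nf
  have hωm : 0 ≤ ω * (ω * ‖β‖ ^ 2) := by
    rw [← mul_assoc]; exact mul_nonneg (mul_self_nonneg ω) (sq_nonneg _)
  rw [hL']
  exact exists_forall_le_of_antitoneOn_Iic_of_monotoneOn_Ici (by norm_num)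
    (by fun_prop) (antitoneOn_quadratic_add_sigmoid _ hωm) (monotoneOn_quadratic_add_sigmoid _ hωm)

theorem univariate_min_in_interval (d : ℕ) (β : EuclideanSpace ℝ (Fin d)) (hβ : β ≠ 0)
    (ω : ℝ) (xhat : EuclideanSpace ℝ (Fin d)) (L : ℝ → ℝ)
    (hL : ∀ k, L k = ω ^ 2 * ‖β‖ ^ 2 * k ^ 2
        + ω / (1 + Real.exp (-(inner ℝ β xhat : ℝ) + k * ω * ‖β‖ ^ 2))) :
    ∃ kstar ∈ Set.Icc (0:ℝ) (1/8), ∀ k : ℝ, L kstar ≤ L k :=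
  univariate_min_in_interval_general d β ω xhat L hL
end

section
/- Let ω ∈ ℝ, β ∈ ℝ^d, x̂ ∈ ℝ^d. Then inf over x ∈ ℝ^d of ‖x - x̂‖₂² + ω/(1 + exp(-⟨β, x⟩)) equals inf over k ∈ ℝ of ω² ‖β‖₂² k² + ω/(1 + exp(-⟨β, x̂⟩ + k ω ‖β‖₂²)). -/
/-!
Only the component of `x - x̂` along `β` enters the logistic term, and projecting `x - x̂`
orthogonally onto `ℝ ∙ β` keeps that component without increasing `‖x - x̂‖`. Hence the infimum
may be taken over the line `x̂ + ℝ β`, which for `ω ≠ 0` is parametrised as `x̂ - k ω β`; for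
`ω = 0` the objective is `‖x - x̂‖²`, minimised at `x̂ = x̂ - k ω β`.
-/

open Real RealInnerProductSpace

section Projection

variable {E : Type*} [NormedAddCommGroup E] [InnerProductSpace ℝ E]

lemma inner_starProjection_span_singleton (β v : E) :
    ⟪β, (ℝ ∙ β).starProjection v⟫ = ⟪β, v⟫ :=
  (Submodule.coe_inner _ _ _).symm.trans <|
    Submodule.inner_orthogonalProjectionOnto_eq_of_mem_left
      ⟨β, Submodule.mem_span_singleton_self β⟩ v

lemma exists_add_smul_le (φ : ℝ → ℝ) (β x₀ x : E) :
    ∃ c : ℝ, ‖x₀ + c • β - x₀‖ ^ 2 + φ ⟪β, x₀ + c • β⟫ ≤ ‖x - x₀‖ ^ 2 + φ ⟪β, x⟫ := by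
  obtain ⟨c, hc⟩ := Submodule.mem_span_singleton.mp
    ((ℝ ∙ β).starProjection_apply_mem (x - x₀))
  refine ⟨c, ?_⟩
  have hnorm : ‖c • β‖ ≤ ‖x - x₀‖ := hc ▸ (ℝ ∙ β).norm_starProjection_apply_le (x - x₀)
  have hinner : ⟪β, x₀ + c • β⟫ = ⟪β, x⟫ := by
    rw [hc, inner_add_right, inner_starProjection_span_singleton, inner_sub_right, add_sub_cancel]
  rw [add_sub_cancel_left, hinner]
  gcongr

end Projection

lemma ciInf_comp_eq_of_forall_exists_le {α ι γ : Type*} [ConditionallyCompleteLattice γ]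
    [Nonempty α] [Nonempty ι] {f : α → γ} (hf : BddBelow (Set.range f)) (e : ι → α)
    (h : ∀ a, ∃ i, f (e i) ≤ f a) : ⨅ i, f (e i) = ⨅ a, f a :=
  le_antisymm (ciInf_mono_of_forall_exists (hf.mono (Set.range_comp_subset_range e f)) h)
    (ciInf_mono_of_forall_exists hf fun i => ⟨e i, le_rfl⟩)

lemma min_zero_le_div_one_add_exp (ω s : ℝ) : min 0 ω ≤ ω / (1 + exp s) := by
  have hpos : 0 < 1 + exp s := by positivity
  rcases le_or_gt 0 ω with hω | hω
  · exact (min_le_left 0 ω).trans (by positivity)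
  · refine (min_le_right 0 ω).trans ?_
    rw [le_div_iff₀ hpos]
    nlinarith [exp_pos s]

theorem univariate_reduction (d : ℕ) (ω : ℝ) (β xhat : EuclideanSpace ℝ (Fin d)) :
    (⨅ x : EuclideanSpace ℝ (Fin d),
        (‖x - xhat‖ ^ 2 + ω / (1 + Real.exp (-(inner ℝ β x : ℝ)))))
      = ⨅ k : ℝ, (ω ^ 2 * ‖β‖ ^ 2 * k ^ 2
          + ω / (1 + Real.exp (-(inner ℝ β xhat : ℝ) + k * ω * ‖β‖ ^ 2))) := by
  set f : EuclideanSpace ℝ (Fin d) → ℝ := fun x => ‖x - xhat‖ ^ 2 + ω / (1 + exp (-⟪β, x⟫))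
  have hbdd : BddBelow (Set.range f) := by
    refine ⟨min 0 ω, ?_⟩
    rintro _ ⟨x, rfl⟩
    exact (min_zero_le_div_one_add_exp ω _).trans (le_add_of_nonneg_left (by positivity))
  have hline : ∀ x, ∃ k : ℝ, f (xhat - (k * ω) • β) ≤ f x := by
    intro x
    rcases eq_or_ne ω 0 with rfl | hω
    · exact ⟨0, by simp [f]⟩
    · obtain ⟨c, hc⟩ := exists_add_smul_le (fun s => ω / (1 + exp (-s))) β xhat x
      refine ⟨-c / ω, ?_⟩
      rwa [neg_div, neg_mul, div_mul_cancel₀ c hω, neg_smul, sub_neg_eq_add]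
  rw [← ciInf_comp_eq_of_forall_exists_le hbdd _ hline]
  congr 1 with k
  simp only [f, sub_sub_cancel_left, norm_neg, norm_smul, norm_mul, Real.norm_eq_abs, mul_pow,
    sq_abs, inner_sub_right, real_inner_smul_right, real_inner_self_eq_norm_sq]
  ring_nf
end
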